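/- Let A, N_1, …, N_m ∈ ℝ^{n×n}, C ∈ ℝ^{p×n}, γ > 0 with every eigenvalue of I ⊗ A + A ⊗ I + γ^{-2} Σ_{k=1}^m N_k ⊗ N_k having strictly negative real part, let u ∈ L² be a continuous control and Φ the fundamental solution of the bilinear system. Set Q := ∫₀^∞ Z*_γ(s, C^⊤C) ds, where Z*_γ(·, C^⊤C) solves the adjoint generalized Lyapunov matrix differential equation, and let q be a unit eigenvector of Q with eigenvalue μ ≥ 0. Then for every t₀ ≥ 0, (∫_{t₀}^∞ ‖C Φ(t, t₀) q‖₂² dt)^{1/2} ≤ μ^{1/2} · exp{0.5 ‖γ u⁰‖_{L²}²}. -/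

import Mathlib

/-!
Let `L X = AᵀX + XA + γ⁻² ∑ₖ NₖᵀXNₖ`, so that `Ż* = L Z*`. Integrating this ODE over `(0, ∞)`
gives the algebraic Lyapunov equation `L Q = -CᵀC`. Moreover `Q ⪰ 0`: `L` is cross-positive on
the cone of positive semidefinite matrices (`xᵀ (L X) x ≥ 0` whenever `X ⪰ 0` and `X x = 0`), and
a first-exit-time argument shows that the flow of a cross-positive operator preserves the cone.

Along the trajectory `w t = Φ(t, t₀) q` the Lyapunov function `F = wᵀQw` then satisfies, after
completing the square in every control `uₖ` with `Nₖ ≠ 0`,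
`F' ≤ -‖C w‖² + ‖γ u⁰(t)‖² F`, and a Gronwall-type argument yields
`∫_{t₀}^∞ ‖C w‖² ≤ F t₀ · exp ‖γ u⁰‖²_{L²} = μ · exp ‖γ u⁰‖²_{L²}`.
-/

open MeasureTheory Matrix Set Filter Topology
open scoped Kronecker Classical

attribute [local instance] Matrix.normedAddCommGroup Matrix.normedSpace

variable {ι κ : Type*} [Fintype ι]

section Calculus

theorem HasDerivAt.dotProduct {f g : ℝ → ι → ℝ} {f' g' : ι → ℝ} {t : ℝ}
    (hf : HasDerivAt f f' t) (hg : HasDerivAt g g' t) :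
    HasDerivAt (fun s => f s ⬝ᵥ g s) (f' ⬝ᵥ g t + f t ⬝ᵥ g') t :=
  (HasDerivAt.fun_sum (u := Finset.univ) fun i _ =>
    (hasDerivAt_pi.1 hf i).fun_mul (hasDerivAt_pi.1 hg i)).congr_deriv Finset.sum_add_distrib

theorem HasDerivAt.matrix_mulVec {M : ℝ → Matrix κ ι ℝ} {v : ℝ → ι → ℝ}
    {M' : Matrix κ ι ℝ} {v' : ι → ℝ} {t : ℝ} (hM : HasDerivAt M M' t) (hv : HasDerivAt v v' t) :
    HasDerivAt (fun s => M s *ᵥ v s) (M' *ᵥ v t + M t *ᵥ v') t :=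
  hasDerivAt_pi.2 fun i => (hasDerivAt_pi.1 hM i).dotProduct hv

theorem HasDerivAt.dotProduct_mulVec_const {Z : ℝ → Matrix ι ι ℝ} {Z' : Matrix ι ι ℝ} {t : ℝ}
    (hZ : HasDerivAt Z Z' t) (x : ι → ℝ) :
    HasDerivAt (fun s => x ⬝ᵥ Z s *ᵥ x) (x ⬝ᵥ Z' *ᵥ x) t :=
  ((hasDerivAt_const t x).dotProduct (hZ.matrix_mulVec (hasDerivAt_const t x))).congr_deriv
    (by simp)

theorem HasDerivAt.nonpos_of_eventually_pos_left {f : ℝ → ℝ} {f' t : ℝ} (hf : HasDerivAt f f' t)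
    (ht : f t = 0) (hpos : ∀ᶠ s in 𝓝[<] t, 0 < f s) : f' ≤ 0 := by
  refine le_of_tendsto ((hasDerivAt_iff_tendsto_slope.1 hf).mono_left (nhdsLT_le_nhdsNE t)) ?_
  filter_upwards [hpos, self_mem_nhdsWithin] with s hs hst
  rw [slope_def_field, ht, sub_zero]
  exact (div_neg_of_pos_of_neg hs (sub_neg.2 hst)).le

theorem map_integral_Ioi_eq_neg_of_hasDerivAt {E : Type*} [NormedAddCommGroup E]
    [NormedSpace ℝ E] [CompleteSpace E] (L : E →L[ℝ] E) {Z : ℝ → E}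
    (hZ : ∀ t, 0 ≤ t → HasDerivAt Z (L (Z t)) t) (hint : IntegrableOn Z (Ioi 0)) :
    L (∫ t in Ioi 0, Z t) = -Z 0 := by
  have hLint : IntegrableOn (fun t => L (Z t)) (Ioi 0) := L.integrable_comp hint
  rw [← L.integral_comp_comm hint, integral_Ioi_of_hasDerivAt_of_tendsto' hZ hLint
    (tendsto_zero_of_hasDerivAt_of_integrableOn_Ioi (fun t ht => hZ t (le_of_lt ht)) hLint hint),
    zero_sub]

theorem intervalIntegral_le_mul_exp_of_hasDerivAt_le {F F' ρ h : ℝ → ℝ} {a T : ℝ} (haT : a ≤ T)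
    (hF : ∀ t ∈ Icc a T, HasDerivAt F (F' t) t) (hF' : ∀ t ∈ Icc a T, F' t ≤ -ρ t + h t * F t)
    (hFT : 0 ≤ F T) (hρ : ContinuousOn ρ (Icc a T)) (hρ0 : ∀ t ∈ Icc a T, 0 ≤ ρ t)
    (hh : Continuous h) (hh0 : ∀ t, 0 ≤ h t) :
    ∫ t in a..T, ρ t ≤ F a * Real.exp (∫ t in a..T, h t) := by
  set E := fun t => ∫ s in a..t, h s
  set R := fun t => ∫ s in a..t, ρ s
  have hE : ∀ t, HasDerivAt E (h t) t := fun t =>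
    intervalIntegral.integral_hasDerivAt_right (hh.intervalIntegrable _ _)
      hh.aestronglyMeasurable.stronglyMeasurableAtFilter hh.continuousAt
  have hEmono : Monotone E := monotone_of_hasDerivAt_nonneg hE hh0
  have hR : ∀ t ∈ Ioo a T, HasDerivAt R (ρ t) t := fun t ht =>
    intervalIntegral.integral_hasDerivAt_right
      ((hρ.mono (Icc_subset_Icc le_rfl ht.2.le)).intervalIntegrable_of_Icc ht.1.le)
      ((hρ.mono Ioo_subset_Icc_self).stronglyMeasurableAtFilter isOpen_Ioo t ht)
      (hρ.continuousAt (Icc_mem_nhds ht.1 ht.2))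
  have hRc : ContinuousOn R (Icc a T) := by
    simpa only [uIcc_of_le haT] using intervalIntegral.continuousOn_primitive_interval'
      (hρ.intervalIntegrable_of_Icc haT) left_mem_uIcc
  -- the weight `exp (-E T) ≤ exp (-E t)` makes `J` nonincreasing
  set J := fun t => F t * Real.exp (-E t) + Real.exp (-E T) * R t
  have hJ : AntitoneOn J (Icc a T) := by
    refine antitoneOn_of_hasDerivWithinAt_nonpos (convex_Icc a T) ?_ (f' := fun t =>
      F' t * Real.exp (-E t) + F t * (Real.exp (-E t) * -h t) + Real.exp (-E T) * ρ t) ?_ ?_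
    · exact ((continuousOn_of_forall_continuousAt fun t ht => (hF t ht).continuousAt).mul
        (continuous_iff_continuousAt.2 fun t => (hE t).neg.exp.continuousAt).continuousOn).add
        (continuousOn_const.mul hRc)
    · rw [interior_Icc]
      exact fun t ht => (((hF t (Ioo_subset_Icc_self ht)).mul (hE t).neg.exp).add
        ((hR t ht).const_mul _)).hasDerivWithinAt
    · rw [interior_Icc]
      intro t ht
      have hexp : Real.exp (-E T) ≤ Real.exp (-E t) :=
        Real.exp_le_exp.2 (neg_le_neg (hEmono ht.2.le))
      nlinarith [hF' t (Ioo_subset_Icc_self ht), hρ0 t (Ioo_subset_Icc_self ht),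
        Real.exp_pos (-E t)]
  have hJT : Real.exp (-E T) * R T ≤ J T :=
    le_add_of_nonneg_left (mul_nonneg hFT (Real.exp_pos _).le)
  have hJa : J a = F a := by simp [J, E, R]
  have := hJT.trans ((hJ ⟨le_rfl, haT⟩ ⟨haT, le_rfl⟩ haT).trans hJa.le)
  rwa [Real.exp_neg, inv_mul_le_iff₀ (Real.exp_pos _), mul_comm] at this

theorem setIntegral_Ioi_le_of_forall_intervalIntegral_le {ρ : ℝ → ℝ} {a B : ℝ}
    (hB : ∀ T, a ≤ T → ∫ t in a..T, ρ t ≤ B) : ∫ t in Ioi a, ρ t ≤ B := by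
  by_cases hint : IntegrableOn ρ (Ioi a)
  · exact le_of_tendsto (intervalIntegral_tendsto_integral_Ioi a hint tendsto_id)
      ((eventually_ge_atTop a).mono hB)
  · simpa [integral_undef hint] using hB a le_rfl

end Calculus

section Matrices

theorem dotProduct_transpose_mul_mulVec {o : Type*} [Fintype o] (B X : Matrix o ι ℝ)
    (x : ι → ℝ) : x ⬝ᵥ (Bᵀ * X) *ᵥ x = (B *ᵥ x) ⬝ᵥ X *ᵥ x := by
  rw [← mulVec_mulVec, dotProduct_mulVec, vecMul_transpose]

theorem two_mul_dotProduct_mulVec_le {X : Matrix ι ι ℝ} (hX : X.PosSemidef) (y w : ι → ℝ) :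
    2 * (y ⬝ᵥ X *ᵥ w) ≤ y ⬝ᵥ X *ᵥ y + w ⬝ᵥ X *ᵥ w := by
  have h := hX.dotProduct_mulVec_nonneg (y - w)
  have hsymm : w ⬝ᵥ X *ᵥ y = y ⬝ᵥ X *ᵥ w := by
    rw [dotProduct_mulVec, ← mulVec_transpose, ← conjTranspose_eq_transpose_of_trivial,
      hX.isHermitian.eq, dotProduct_comm]
  simp only [star_trivial, sub_dotProduct, mulVec_sub, dotProduct_sub, hsymm] at h
  linarith

theorem isCompact_setOf_dotProduct_self_eq_one : IsCompact {x : ι → ℝ | x ⬝ᵥ x = 1} := by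
  refine Metric.isCompact_of_isClosed_isBounded
    (isClosed_eq (continuous_id.dotProduct continuous_id) continuous_const)
    ((Metric.isBounded_closedBall (x := 0) (r := 1)).subset fun x hx => ?_)
  rw [mem_closedBall_zero_iff, pi_norm_le_iff_of_nonneg zero_le_one]
  intro i
  rw [Real.norm_eq_abs, abs_le_one_iff_mul_self_le_one, ← show x ⬝ᵥ x = 1 from hx]
  exact Finset.single_le_sum (f := fun j => x j * x j) (fun j _ => mul_self_nonneg _)
    (Finset.mem_univ i)

theorem posSemidef_of_forall_dotProduct_self_eq_one {M : Matrix ι ι ℝ} (hM : M.IsHermitian)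
    (h : ∀ x, x ⬝ᵥ x = 1 → 0 ≤ x ⬝ᵥ M *ᵥ x) : M.PosSemidef := by
  refine .of_dotProduct_mulVec_nonneg hM fun x => ?_
  rw [star_trivial]
  rcases eq_or_ne x 0 with rfl | hx
  · simp
  have hpos : 0 < x ⬝ᵥ x := lt_of_le_of_ne (by simpa using dotProduct_star_self_nonneg x)
    (Ne.symm (dotProduct_self_eq_zero.not.2 hx))
  set r := √(x ⬝ᵥ x)
  have hr : 0 < r := Real.sqrt_pos.2 hpos
  have hr2 : r ^ 2 = x ⬝ᵥ x := Real.sq_sqrt hpos.le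
  have hunit : (r⁻¹ • x) ⬝ᵥ (r⁻¹ • x) = 1 := by
    rw [smul_dotProduct, dotProduct_smul, smul_smul, smul_eq_mul, ← hr2]
    field_simp
  have h' := h _ hunit
  rw [mulVec_smul, smul_dotProduct, dotProduct_smul, smul_smul, smul_eq_mul] at h'
  exact (mul_nonneg_iff_of_pos_left (by positivity)).1 h'

theorem posSemidef_integral {α : Type*} [MeasurableSpace α] {μ : Measure α}
    {Z : α → Matrix ι ι ℝ}
    (hZ : @Integrable _ UniformSpace.toTopologicalSpace SeminormedAddGroup.toContinuousENorm _ _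
      Z μ)
    (hpsd : ∀ᵐ a ∂μ, (Z a).PosSemidef) : (∫ a, Z a ∂μ).PosSemidef := by
  refine .of_dotProduct_mulVec_nonneg (isHermitian_iff_isSymm.2 ?_) fun x => ?_
  · let T := (transposeLinearEquiv ι ι ℝ ℝ).toContinuousLinearEquiv
    refine (T.integral_comp_comm Z).symm.trans (integral_congr_ae ?_)
    filter_upwards [hpsd] with a ha using isHermitian_iff_isSymm.1 ha.isHermitian
  · let q : Matrix ι ι ℝ →L[ℝ] ℝ := LinearMap.toContinuousLinearMap
      ((LinearMap.applyₗ x).comp ((LinearMap.applyₗ x).comp (toLinearMap₂' ℝ).toLinearMap))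
    have hq : ∀ M, q M = x ⬝ᵥ M *ᵥ x := fun M => toLinearMap₂'_apply' M x x
    rw [star_trivial, ← hq]
    refine le_of_le_of_eq (integral_nonneg_of_ae ?_) (q.integral_comp_comm hZ)
    filter_upwards [hpsd] with a ha
    exact (hq (Z a)).ge.trans' (by simpa using ha.dotProduct_mulVec_nonneg x)

end Matrices

section InvariantCone

theorem exists_first_zero_of_continuous {E : Type*} [TopologicalSpace E] {S : Set E}
    (hS : IsCompact S) {g : ℝ → E → ℝ} (hg : Continuous ↿g) (h0 : ∀ y ∈ S, 0 < g 0 y)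
    {t : ℝ} (ht : 0 ≤ t) {x : E} (hx : x ∈ S) (hgx : g t x ≤ 0) :
    ∃ ts > 0, ∃ x₀ ∈ S, g ts x₀ = 0 ∧ (∀ y ∈ S, 0 ≤ g ts y) ∧
      ∀ s ∈ Ico 0 ts, ∀ y ∈ S, 0 < g s y := by
  have hgS : ∀ s, IsCompact (g s '' S) := fun s => hS.image (hg.comp (Continuous.prodMk_right s))
  set m : ℝ → ℝ := fun s => sInf (g s '' S)
  have hm : Continuous m := hS.continuous_sInf hg
  have hmg : ∀ s, ∀ y ∈ S, m s ≤ g s y := fun s y hy =>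
    csInf_le (hgS s).bddBelow (mem_image_of_mem _ hy)
  have hmin : ∀ s, ∃ y ∈ S, g s y = m s := fun s => (hgS s).sInf_mem ⟨_, mem_image_of_mem _ hx⟩
  set B := {s | 0 ≤ s ∧ m s ≤ 0}
  have hBbdd : BddBelow B := ⟨0, fun s hs => hs.1⟩
  have htsB : sInf B ∈ B :=
    ((isClosed_le continuous_const continuous_id).inter (isClosed_le hm continuous_const)
      ).csInf_mem ⟨t, ht, (hmg t x hx).trans hgx⟩ hBbdd
  set ts := sInf B
  have hbefore : ∀ s ∈ Ico 0 ts, ∀ y ∈ S, 0 < g s y := fun s hs y hy =>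
    (lt_of_not_ge fun hms => (csInf_le hBbdd ⟨hs.1, hms⟩).not_gt hs.2).trans_le (hmg s y hy)
  have hts : 0 < ts := by
    refine htsB.1.lt_of_ne fun h => ?_
    obtain ⟨y, hy, hgy⟩ := hmin 0
    have h' := htsB.2
    rw [← h, ← hgy] at h'
    exact (h0 y hy).not_ge h'
  have hnonneg : ∀ y ∈ S, 0 ≤ g ts y := fun y hy =>
    ge_of_tendsto (((hg.comp (Continuous.prodMk_left y)).tendsto ts).mono_left
      (nhdsWithin_le_nhds (s := Iio ts)))
      (by filter_upwards [Ioo_mem_nhdsLT hts] with s hs using (hbefore s ⟨hs.1.le, hs.2⟩ y hy).le)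
  obtain ⟨x₀, hx₀, hgx₀⟩ := hmin ts
  exact ⟨ts, hts, x₀, hx₀, le_antisymm (hgx₀ ▸ htsB.2) (hnonneg x₀ hx₀), hnonneg, hbefore⟩

theorem isSymm_of_hasDerivAt (L : Matrix ι ι ℝ →L[ℝ] Matrix ι ι ℝ) (hL : ∀ X, (L X)ᵀ = L Xᵀ)
    {Z : ℝ → Matrix ι ι ℝ} (hZ : ∀ t, 0 ≤ t → HasDerivAt Z (L (Z t)) t) (h0 : (Z 0).IsSymm)
    {t : ℝ} (ht : 0 ≤ t) : (Z t).IsSymm := by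
  have hZt : ∀ s, 0 ≤ s → HasDerivAt (fun s => (Z s)ᵀ) (L (Z s)ᵀ) s := fun s hs => by
    rw [← hL]
    exact (transposeLinearEquiv ι ι ℝ ℝ).toContinuousLinearEquiv.hasFDerivAt.comp_hasDerivAt s
      (hZ s hs)
  refine ODE_solution_unique (v := fun _ => L) (f := fun s => (Z s)ᵀ) (g := Z)
    (fun _ => L.lipschitz) ?_ ?_ ?_ ?_ h0 ⟨ht, le_rfl⟩
  · exact fun s hs => (hZt s hs.1).continuousAt.continuousWithinAt
  · exact fun s hs => (hZt s hs.1).hasDerivWithinAt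
  · exact fun s hs => (hZ s hs.1).continuousAt.continuousWithinAt
  · exact fun s hs => (hZ s hs.1).hasDerivWithinAt

variable [DecidableEq ι]

theorem dotProduct_mulVec_add_exp_pos (L : Matrix ι ι ℝ →L[ℝ] Matrix ι ι ℝ)
    (hL : ∀ X : Matrix ι ι ℝ, X.PosSemidef → ∀ x, X *ᵥ x = 0 → 0 ≤ x ⬝ᵥ L X *ᵥ x)
    {Z : ℝ → Matrix ι ι ℝ} (hZ : ∀ t, 0 ≤ t → HasDerivAt Z (L (Z t)) t)
    (hsymm : ∀ t, 0 ≤ t → (Z t).IsHermitian) (h0 : (Z 0).PosSemidef) {ω δ : ℝ}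
    (hω : ∀ x, x ⬝ᵥ x = 1 → x ⬝ᵥ L 1 *ᵥ x < ω)
    (hδ : 0 < δ) {t : ℝ} (ht : 0 ≤ t) {x : ι → ℝ} (hx : x ⬝ᵥ x = 1) :
    0 < x ⬝ᵥ Z t *ᵥ x + δ * Real.exp (ω * t) := by
  -- `Z` is only controlled on `[0, ∞)`; freezing it at `Z 0` before time `0` makes `g` continuous
  have hZc : Continuous fun s => Z (max s 0) :=
    ContinuousOn.comp_continuous (fun s hs => (hZ s hs).continuousAt.continuousWithinAt)
      (continuous_id.max continuous_const) fun s => le_max_right s 0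
  set g : ℝ → (ι → ℝ) → ℝ := fun s y => y ⬝ᵥ Z (max s 0) *ᵥ y + δ * Real.exp (ω * s)
  have hg : Continuous ↿g := (continuous_snd.dotProduct
    ((hZc.comp continuous_fst).matrix_mulVec continuous_snd)).add
    (continuous_const.mul (Real.continuous_exp.comp (continuous_const.mul continuous_fst)))
  have hg0 : ∀ y ∈ {x : ι → ℝ | x ⬝ᵥ x = 1}, 0 < g 0 y := fun y _ => by
    simp only [g, max_self, mul_zero, Real.exp_zero, mul_one]
    linarith [by simpa using h0.dotProduct_mulVec_nonneg y]
  by_contra! hneg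
  obtain ⟨ts, hts, x₀, hx₀, hgx₀, hnonneg, hbefore⟩ :=
    exists_first_zero_of_continuous isCompact_setOf_dotProduct_self_eq_one hg hg0 ht hx
      (by simpa only [g, max_eq_left ht] using hneg)
  set c := δ * Real.exp (ω * ts)
  have hgW : ∀ y : ι → ℝ, y ⬝ᵥ y = 1 → g ts y = y ⬝ᵥ (Z ts + c • 1) *ᵥ y := fun y hy => by
    simp only [g, max_eq_left hts.le, add_mulVec, smul_mulVec, one_mulVec, dotProduct_add,
      dotProduct_smul, smul_eq_mul, hy, mul_one, c]
  have hW : (Z ts + c • 1).PosSemidef :=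
    posSemidef_of_forall_dotProduct_self_eq_one
      ((hsymm ts hts.le).add (isHermitian_one.smul (.all c))) fun y hy =>
      hgW y hy ▸ hnonneg y hy
  have hWx₀ : (Z ts + c • 1) *ᵥ x₀ = 0 :=
    (hW.dotProduct_mulVec_zero_iff x₀).1 (by rw [star_trivial, ← hgW x₀ hx₀, hgx₀])
  have hderiv : HasDerivAt (fun s => x₀ ⬝ᵥ Z s *ᵥ x₀ + δ * Real.exp (ω * s))
      (x₀ ⬝ᵥ L (Z ts) *ᵥ x₀ + c * ω) ts := by
    refine (((hZ ts hts.le).dotProduct_mulVec_const x₀).add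
      (((hasDerivAt_id ts).const_mul ω).exp.const_mul δ)).congr_deriv ?_
    simp only [id, mul_one, mul_assoc, c]
  -- `L` is cross-positive and `L 1 < ω` on the unit sphere, so the derivative is positive
  have hLW := hL _ hW x₀ hWx₀
  rw [map_add, map_smul, add_mulVec, smul_mulVec, dotProduct_add, dotProduct_smul,
    smul_eq_mul] at hLW
  have hc : 0 < c := by positivity
  have hpos : 0 < x₀ ⬝ᵥ L (Z ts) *ᵥ x₀ + c * ω := by nlinarith [hω x₀ hx₀]
  refine hpos.not_ge (hderiv.nonpos_of_eventually_pos_left ?_ ?_)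
  · simpa only [g, max_eq_left hts.le] using hgx₀
  · filter_upwards [Ioo_mem_nhdsLT hts] with s hs
    simpa only [g, max_eq_left hs.1.le] using hbefore s ⟨hs.1.le, hs.2⟩ x₀ hx₀

theorem posSemidef_of_hasDerivAt (L : Matrix ι ι ℝ →L[ℝ] Matrix ι ι ℝ)
    (hL : ∀ X : Matrix ι ι ℝ, X.PosSemidef → ∀ x, X *ᵥ x = 0 → 0 ≤ x ⬝ᵥ L X *ᵥ x)
    {Z : ℝ → Matrix ι ι ℝ} (hZ : ∀ t, 0 ≤ t → HasDerivAt Z (L (Z t)) t)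
    (hsymm : ∀ t, 0 ≤ t → (Z t).IsHermitian) (h0 : (Z 0).PosSemidef) {t : ℝ} (ht : 0 ≤ t) :
    (Z t).PosSemidef := by
  obtain ⟨K, hK⟩ := isCompact_setOf_dotProduct_self_eq_one.bddAbove_image
    (f := fun x : ι → ℝ => x ⬝ᵥ L 1 *ᵥ x)
    (continuous_id.dotProduct (continuous_const.matrix_mulVec continuous_id)).continuousOn
  refine posSemidef_of_forall_dotProduct_self_eq_one (hsymm t ht) fun x hx =>
    le_of_forall_pos_lt_add fun ε hε => ?_
  have h := dotProduct_mulVec_add_exp_pos L hL hZ hsymm h0 (ω := K + 1)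
    (fun y hy => (hK ⟨y, hy, rfl⟩).trans_lt (lt_add_one K))
    (δ := ε * Real.exp (-((K + 1) * t))) (by positivity) ht hx
  rwa [mul_assoc, ← Real.exp_add, neg_add_cancel, Real.exp_zero, mul_one] at h

end InvariantCone

section Lyapunov

variable [Fintype κ] (A : Matrix ι ι ℝ) (N : κ → Matrix ι ι ℝ)

noncomputable def lyapunovOp (c : ℝ) : Matrix ι ι ℝ →L[ℝ] Matrix ι ι ℝ :=
  LinearMap.toContinuousLinearMap
    { toFun := fun X => Aᵀ * X + X * A + c • ∑ k, (N k)ᵀ * X * N k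
      map_add' := fun X Y => by
        simp only [Matrix.mul_add, Matrix.add_mul, Finset.sum_add_distrib, smul_add]
        abel
      map_smul' := fun r X => by
        simp only [Matrix.mul_smul, Matrix.smul_mul, ← Finset.smul_sum, smul_add, smul_comm c r,
          RingHom.id_apply] }

@[simp] theorem lyapunovOp_apply (c : ℝ) (X : Matrix ι ι ℝ) :
    lyapunovOp A N c X = Aᵀ * X + X * A + c • ∑ k, (N k)ᵀ * X * N k := rfl

theorem lyapunovOp_transpose (c : ℝ) (X : Matrix ι ι ℝ) :
    (lyapunovOp A N c X)ᵀ = lyapunovOp A N c Xᵀ := by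
  simp only [lyapunovOp_apply, transpose_add, transpose_mul, transpose_smul, transpose_sum,
    transpose_transpose, Matrix.mul_assoc]
  abel

theorem dotProduct_lyapunovOp_mulVec (c : ℝ) {X : Matrix ι ι ℝ} (hX : X.IsSymm) (x : ι → ℝ) :
    x ⬝ᵥ lyapunovOp A N c X *ᵥ x
      = 2 * ((A *ᵥ x) ⬝ᵥ X *ᵥ x) + c * ∑ k, (N k *ᵥ x) ⬝ᵥ X *ᵥ (N k *ᵥ x) := by
  have hXA : x ⬝ᵥ (X * A) *ᵥ x = (A *ᵥ x) ⬝ᵥ X *ᵥ x := by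
    rw [← mulVec_mulVec, dotProduct_mulVec, ← mulVec_transpose, hX.eq, dotProduct_comm]
  have hN : ∀ k, x ⬝ᵥ ((N k)ᵀ * X * N k) *ᵥ x = (N k *ᵥ x) ⬝ᵥ X *ᵥ (N k *ᵥ x) := fun k => by
    rw [Matrix.mul_assoc, dotProduct_transpose_mul_mulVec, mulVec_mulVec]
  simp only [lyapunovOp_apply, add_mulVec, smul_mulVec, sum_mulVec, dotProduct_add,
    dotProduct_smul, dotProduct_sum, smul_eq_mul, dotProduct_transpose_mul_mulVec, hXA, hN]
  ring

theorem lyapunovOp_dotProduct_nonneg {c : ℝ} (hc : 0 ≤ c) {X : Matrix ι ι ℝ}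
    (hX : X.PosSemidef) {x : ι → ℝ} (hx : X *ᵥ x = 0) : 0 ≤ x ⬝ᵥ lyapunovOp A N c X *ᵥ x := by
  rw [dotProduct_lyapunovOp_mulVec A N c (isHermitian_iff_isSymm.1 hX.isHermitian), hx,
    dotProduct_zero, mul_zero, zero_add]
  exact mul_nonneg hc (Finset.sum_nonneg fun k _ => by
    simpa using hX.dotProduct_mulVec_nonneg (N k *ᵥ x))

theorem posSemidef_integral_of_hasDerivAt_lyapunovOp [DecidableEq ι] {c : ℝ} (hc : 0 ≤ c)
    {Z : ℝ → Matrix ι ι ℝ} (hZ : ∀ t, 0 ≤ t → HasDerivAt Z (lyapunovOp A N c (Z t)) t)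
    (h0 : (Z 0).PosSemidef)
    (hint : @IntegrableOn _ _ _ UniformSpace.toTopologicalSpace
      SeminormedAddGroup.toContinuousENorm Z (Ioi 0) volume) :
    (∫ t in Ioi 0, Z t).PosSemidef := by
  have hsymm : ∀ t, 0 ≤ t → (Z t).IsHermitian := fun t ht =>
    isHermitian_iff_isSymm.2 <| isSymm_of_hasDerivAt _ (lyapunovOp_transpose A N c) hZ
      (isHermitian_iff_isSymm.1 h0.isHermitian) ht
  exact posSemidef_integral hint <| ae_restrict_of_forall_mem measurableSet_Ioi fun t ht =>
    posSemidef_of_hasDerivAt _ (fun X hX x hx => lyapunovOp_dotProduct_nonneg A N hc hX hx) hZ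
      hsymm h0 (le_of_lt ht)

end Lyapunov

section BilinearSystem

variable [Fintype κ]

theorem two_mul_lyapunov_dissipation_le {A : Matrix ι ι ℝ} {N : κ → Matrix ι ι ℝ}
    {Q R : Matrix ι ι ℝ} {γ : ℝ} (hγ : γ ≠ 0) (hQ : Q.PosSemidef)
    (hLQ : lyapunovOp A N (γ ^ 2)⁻¹ Q = -R) (v : κ → ℝ) (w : ι → ℝ) :
    2 * ((A *ᵥ w + ∑ k, v k • N k *ᵥ w) ⬝ᵥ Q *ᵥ w)
      ≤ -(w ⬝ᵥ R *ᵥ w) + (∑ k, (γ * if N k = 0 then 0 else v k) ^ 2) * (w ⬝ᵥ Q *ᵥ w) := by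
  have hL := dotProduct_lyapunovOp_mulVec A N (γ ^ 2)⁻¹ (isHermitian_iff_isSymm.1 hQ.1) w
  rw [hLQ, neg_mulVec, dotProduct_neg] at hL
  have hk : ∀ k, 2 * (v k * ((N k *ᵥ w) ⬝ᵥ Q *ᵥ w)) ≤ (γ ^ 2)⁻¹ * ((N k *ᵥ w) ⬝ᵥ Q *ᵥ (N k *ᵥ w))
      + (γ * if N k = 0 then 0 else v k) ^ 2 * (w ⬝ᵥ Q *ᵥ w) := fun k => by
    split_ifs with hN
    · simp [hN]
    · have := two_mul_dotProduct_mulVec_le hQ (γ⁻¹ • N k *ᵥ w) ((γ * v k) • w)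
      simp only [mulVec_smul, smul_dotProduct, dotProduct_smul, smul_eq_mul] at this
      convert this using 2 <;> field_simp
  have hsum := Finset.sum_le_sum fun k (_ : k ∈ Finset.univ) => hk k
  rw [Finset.sum_add_distrib, ← Finset.mul_sum, ← Finset.sum_mul, ← Finset.mul_sum] at hsum
  simp only [add_dotProduct, sum_dotProduct, smul_dotProduct, smul_eq_mul]
  linarith

theorem continuous_sum_sq_mul_ite (N : κ → Matrix ι ι ℝ) (γ : ℝ) {u : ℝ → κ → ℝ}
    (hu : Continuous u) : Continuous fun t => ∑ k, (γ * if N k = 0 then 0 else u t k) ^ 2 :=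
  continuous_finsetSum _ fun k _ => ((continuous_if_const _ (fun _ => continuous_const)
    fun _ => (continuous_apply k).comp hu).const_mul γ).pow 2

theorem integrableOn_sum_sq_mul_ite (N : κ → Matrix ι ι ℝ) (γ : ℝ) {u : ℝ → κ → ℝ}
    (hu : Continuous u) {s : Set ℝ} (hu2 : IntegrableOn (fun t => ∑ k, u t k ^ 2) s) :
    IntegrableOn (fun t => ∑ k, (γ * if N k = 0 then 0 else u t k) ^ 2) s := by
  refine (hu2.const_mul (γ ^ 2)).mono' (continuous_sum_sq_mul_ite N γ hu).aestronglyMeasurable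
    (ae_of_all _ fun t => ?_)
  rw [Real.norm_of_nonneg (by positivity), Finset.mul_sum]
  refine Finset.sum_le_sum fun k _ => ?_
  split_ifs <;> simp [mul_pow, mul_nonneg, sq_nonneg]

theorem intervalIntegral_output_energy_le {o : Type*} [Fintype o] {A : Matrix ι ι ℝ}
    {N : κ → Matrix ι ι ℝ} {C : Matrix o ι ℝ} {Q : Matrix ι ι ℝ} {γ : ℝ} (hγ : γ ≠ 0)
    (hQ : Q.PosSemidef) (hLQ : lyapunovOp A N (γ ^ 2)⁻¹ Q = -(Cᵀ * C)) {u : ℝ → κ → ℝ}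
    (hu : Continuous u) {w : ℝ → ι → ℝ} {t₀ T : ℝ} (hT : t₀ ≤ T)
    (hw : ∀ t, t₀ ≤ t → HasDerivAt w (A *ᵥ w t + ∑ k, u t k • N k *ᵥ w t) t) :
    ∫ t in t₀..T, ∑ i, (C *ᵥ w t) i ^ 2 ≤ (w t₀ ⬝ᵥ Q *ᵥ w t₀)
      * Real.exp (∫ t in t₀..T, ∑ k, (γ * if N k = 0 then 0 else u t k) ^ 2) := by
  have hQs : Qᵀ = Q := isHermitian_iff_isSymm.1 hQ.1
  have hwc : ContinuousOn w (Icc t₀ T) := fun t ht => (hw t ht.1).continuousAt.continuousWithinAt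
  have hCw : ∀ t, ∑ i, (C *ᵥ w t) i ^ 2 = w t ⬝ᵥ (Cᵀ * C) *ᵥ w t := fun t => by
    rw [dotProduct_transpose_mul_mulVec]
    simp only [dotProduct, sq]
  refine intervalIntegral_le_mul_exp_of_hasDerivAt_le hT (F := fun t => w t ⬝ᵥ Q *ᵥ w t)
    (F' := fun t => 2 * ((A *ᵥ w t + ∑ k, u t k • N k *ᵥ w t) ⬝ᵥ Q *ᵥ w t)) (fun t ht => ?_)
    (fun t _ => ?_) (by simpa using hQ.dotProduct_mulVec_nonneg (w T)) ?_
    (fun t _ => by positivity) (continuous_sum_sq_mul_ite N γ hu) (fun t => by positivity)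
  · refine ((hw t ht.1).dotProduct ((hasDerivAt_const t Q).matrix_mulVec (hw t ht.1))
      ).congr_deriv ?_
    rw [zero_mulVec, zero_add, two_mul, dotProduct_mulVec (w t), ← mulVec_transpose, hQs,
      dotProduct_comm (Q *ᵥ w t)]
  · simpa only [hCw] using two_mul_lyapunov_dissipation_le hγ hQ hLQ (u t) (w t)
  · exact continuousOn_finsetSum _ fun i _ => ((continuous_apply i).comp_continuousOn
      ((continuous_const.matrix_mulVec continuous_id).comp_continuousOn hwc)).pow 2

end BilinearSystem

theorem dominant_subspace_estimate_Q_general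
    {n p m : ℕ}
    (A : Matrix (Fin n) (Fin n) ℝ) (N : Fin m → Matrix (Fin n) (Fin n) ℝ)
    (C : Matrix (Fin p) (Fin n) ℝ)
    (γ : ℝ) (hγ : 0 < γ)
    (u : ℝ → Fin m → ℝ) (hu : Continuous u)
    (huL2 : IntegrableOn (fun s => ∑ k, (u s k) ^ 2) (Set.Ioi 0))
    -- `Φ` is the fundamental solution of the bilinear system
    (Φ : ℝ → ℝ → Matrix (Fin n) (Fin n) ℝ)
    (hΦinit : ∀ s, 0 ≤ s → Φ s s = 1)
    (hΦode : ∀ s, 0 ≤ s → ∀ t, s ≤ t →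
      HasDerivAt (fun τ => Φ τ s) (A * Φ t s + ∑ k, u t k • (N k * Φ t s)) t)
    -- `Zs = Z*_γ(·, CᵀC)` solves the adjoint generalized Lyapunov matrix ODE,
    -- and `Q = ∫₀^∞ Zs(s) ds`
    (Zs : ℝ → Matrix (Fin n) (Fin n) ℝ)
    (hZs0 : Zs 0 = Cᵀ * C)
    (hZsode : ∀ t, 0 ≤ t →
      HasDerivAt Zs (Aᵀ * Zs t + Zs t * A + (γ ^ 2)⁻¹ • ∑ k, (N k)ᵀ * Zs t * N k) t)
    (hZsint : @IntegrableOn _ _ _ UniformSpace.toTopologicalSpace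
      SeminormedAddGroup.toContinuousENorm Zs (Set.Ioi 0) volume)
    -- `qv` is a unit eigenvector of `Q` with eigenvalue `μ ≥ 0`
    (qv : Fin n → ℝ) (hq : ∑ i, qv i ^ 2 = 1)
    (μ : ℝ)
    (heig : (∫ s in Set.Ioi (0 : ℝ), Zs s).mulVec qv = μ • qv)
    (t₀ : ℝ) (ht₀ : 0 ≤ t₀) :
    Real.sqrt (∫ t in Set.Ioi t₀, ∑ i, ((C * Φ t t₀).mulVec qv i) ^ 2)
      ≤ Real.sqrt μ
        * Real.exp (0.5 * ∫ v in Set.Ioi (0 : ℝ),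
            ∑ k, (γ * (if N k = 0 then (0 : ℝ) else u v k)) ^ 2) := by
  have hZ : ∀ t, 0 ≤ t → HasDerivAt Zs (lyapunovOp A N (γ ^ 2)⁻¹ (Zs t)) t := hZsode
  have hQ : (∫ s in Ioi (0 : ℝ), Zs s).PosSemidef :=
    posSemidef_integral_of_hasDerivAt_lyapunovOp A N (by positivity) hZ
      (by simpa [hZs0] using posSemidef_conjTranspose_mul_self C) hZsint
  have hLQ := hZs0 ▸ map_integral_Ioi_eq_neg_of_hasDerivAt _ hZ hZsint
  have hw : ∀ t, t₀ ≤ t → HasDerivAt (fun s => Φ s t₀ *ᵥ qv)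
      (A *ᵥ (Φ t t₀ *ᵥ qv) + ∑ k, u t k • N k *ᵥ (Φ t t₀ *ᵥ qv)) t := fun t ht =>
    ((hΦode t₀ ht₀ t ht).matrix_mulVec (hasDerivAt_const t qv)).congr_deriv (by
      simp [add_mulVec, sum_mulVec, mulVec_mulVec, smul_mulVec])
  have hF₀ : (Φ t₀ t₀ *ᵥ qv) ⬝ᵥ (∫ s in Ioi (0 : ℝ), Zs s) *ᵥ (Φ t₀ t₀ *ᵥ qv) = μ := by
    have hqq : qv ⬝ᵥ qv = 1 := by simpa only [dotProduct, sq] using hq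
    rw [hΦinit t₀ ht₀, one_mulVec, heig, dotProduct_smul, smul_eq_mul, hqq, mul_one]
  have hμ : 0 ≤ μ := hF₀ ▸ by simpa using hQ.dotProduct_mulVec_nonneg (Φ t₀ t₀ *ᵥ qv)
  set H := ∫ v in Ioi (0 : ℝ), ∑ k, (γ * (if N k = 0 then (0 : ℝ) else u v k)) ^ 2
  have hbound : ∀ T, t₀ ≤ T → ∫ t in t₀..T, ∑ i, ((C * Φ t t₀) *ᵥ qv) i ^ 2 ≤ μ * Real.exp H := by
    intro T hT
    simp only [← mulVec_mulVec]
    refine (intervalIntegral_output_energy_le hγ.ne' hQ hLQ hu hT hw).trans ?_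
    rw [hF₀]
    gcongr
    rw [intervalIntegral.integral_of_le hT]
    exact setIntegral_mono_set (integrableOn_sum_sq_mul_ite N γ hu huL2)
      (ae_of_all _ fun t => by positivity)
      (Ioc_subset_Ioi_self.trans (Ioi_subset_Ioi ht₀)).eventuallyLE
  calc √(∫ t in Ioi t₀, ∑ i, ((C * Φ t t₀) *ᵥ qv) i ^ 2)
      ≤ √(μ * Real.exp H) :=
        Real.sqrt_le_sqrt (setIntegral_Ioi_le_of_forall_intervalIntegral_le hbound)
    _ = √μ * Real.exp (0.5 * H) := by
      rw [Real.sqrt_mul' _ (Real.exp_pos H).le, ← Real.exp_half]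
      norm_num [div_eq_inv_mul]

/-- Proposition 3.2: any unit eigenvector `q` of the observability Gramian
`Q = ∫₀^∞ Z*_γ(s, CᵀC) ds` with eigenvalue `μ` satisfies, for every `t₀ ≥ 0`,
`(∫_{t₀}^∞ ‖C Φ(t,t₀) q‖₂² dt)^{1/2} ≤ μ^{1/2} exp{0.5 ‖γ u⁰‖²_{L²}}`. -/
theorem dominant_subspace_estimate_Q
    {n p m : ℕ}
    (A : Matrix (Fin n) (Fin n) ℝ) (N : Fin m → Matrix (Fin n) (Fin n) ℝ)
    (C : Matrix (Fin p) (Fin n) ℝ)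
    (γ : ℝ) (hγ : 0 < γ)
    (hstab : ∀ μ ∈ spectrum ℂ
      (((1 : Matrix (Fin n) (Fin n) ℝ) ⊗ₖ A + A ⊗ₖ (1 : Matrix (Fin n) (Fin n) ℝ)
        + (γ ^ 2)⁻¹ • ∑ k, N k ⊗ₖ N k).map (Complex.ofReal : ℝ → ℂ)), μ.re < 0)
    (u : ℝ → Fin m → ℝ) (hu : Continuous u)
    (huL2 : IntegrableOn (fun s => ∑ k, (u s k) ^ 2) (Set.Ioi 0))
    -- `Φ` is the fundamental solution of the bilinear system
    (Φ : ℝ → ℝ → Matrix (Fin n) (Fin n) ℝ)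
    (hΦinit : ∀ s, 0 ≤ s → Φ s s = 1)
    (hΦode : ∀ s, 0 ≤ s → ∀ t, s ≤ t →
      HasDerivAt (fun τ => Φ τ s) (A * Φ t s + ∑ k, u t k • (N k * Φ t s)) t)
    -- `Zs = Z*_γ(·, CᵀC)` solves the adjoint generalized Lyapunov matrix ODE,
    -- and `Q = ∫₀^∞ Zs(s) ds`
    (Zs : ℝ → Matrix (Fin n) (Fin n) ℝ)
    (hZs0 : Zs 0 = Cᵀ * C)
    (hZsode : ∀ t, 0 ≤ t →
      HasDerivAt Zs (Aᵀ * Zs t + Zs t * A + (γ ^ 2)⁻¹ • ∑ k, (N k)ᵀ * Zs t * N k) t)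
    (hZsint : @IntegrableOn _ _ _ UniformSpace.toTopologicalSpace
      SeminormedAddGroup.toContinuousENorm Zs (Set.Ioi 0) volume)
    -- `qv` is a unit eigenvector of `Q` with eigenvalue `μ ≥ 0`
    (qv : Fin n → ℝ) (hq : ∑ i, qv i ^ 2 = 1)
    (μ : ℝ) (hμ : 0 ≤ μ)
    (heig : (∫ s in Set.Ioi (0 : ℝ), Zs s).mulVec qv = μ • qv)
    (t₀ : ℝ) (ht₀ : 0 ≤ t₀) :
    Real.sqrt (∫ t in Set.Ioi t₀, ∑ i, ((C * Φ t t₀).mulVec qv i) ^ 2)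
      ≤ Real.sqrt μ
        * Real.exp (0.5 * ∫ v in Set.Ioi (0 : ℝ),
            ∑ k, (γ * (if N k = 0 then (0 : ℝ) else u v k)) ^ 2) :=
  dominant_subspace_estimate_Q_general A N C γ hγ u hu huL2 Φ hΦinit hΦode Zs hZs0 hZsode hZsint qv
    hq μ heig t₀ ht₀
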